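/- arXiv:2407.02276 — 3 statements merged into one kernel-verified Lean document; each statement's English description precedes it below -/
import Mathlib

section
/- Let (A, φ) be a noncommutative probability space realized on a Hilbert space H with unit vector ξ such that φ(a) = ⟨ξ, aξ⟩, let P be the orthogonal projection onto Cξ and Q = 1 − P. Then for all a₁,...,a_k in A, the boolean cumulant satisfies K_bool,k[a₁,...,a_k] = ⟨ξ, a₁ Q a₂ Q ··· Q a_k ξ⟩, where K_bool,k[a₁,...,a_k] = Σ_{π ∈ I_k} (−1)^{|π|−1} Π_{B ∈ π} φ(Π_{j ∈ B} a_j) and I_k is the set of interval partitions of [k]. -/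
/-!
Substituting `Q = 1 - P` in the first gap gives
`⟨ξ, a₁ Q a₂ Q ⋯ Q a_k ξ⟩ = ⟨ξ, (a₁ a₂) Q ⋯ Q a_k ξ⟩ - φ(a₁) ⟨ξ, a₂ Q ⋯ Q a_k ξ⟩`.
The alternating sum over interval partitions satisfies the same recursion, since an interval
partition of `[k]` either has `{1}` as a block (removing it flips the sign) or has `1` and `2`
in a common block (merging `a₁ a₂` into one entry). Both sides equal `φ(a₁)` for `k = 1`.
-/

open List

namespace Composition

variable {n : ℕ}

def consOne (c : Composition n) : Composition (n + 1) where
  blocks := 1 :: c.blocks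
  blocks_pos := by simpa using fun _ => c.blocks_pos
  blocks_sum := by simp [c.blocks_sum, add_comm]

def succHead (c : Composition (n + 1)) : Composition (n + 2) where
  blocks := c.blocks.modifyHead (· + 1)
  blocks_pos := by
    obtain ⟨_ | ⟨b, bs⟩, hpos, -⟩ := c
    · simp
    · simp_all
  blocks_sum := by
    obtain ⟨_ | ⟨b, bs⟩, -, hsum⟩ := c
    · simp at hsum
    · simp only [modifyHead_cons, sum_cons] at hsum ⊢
      omega

@[simp] theorem consOne_blocks (c : Composition n) : c.consOne.blocks = 1 :: c.blocks := rfl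

@[simp] theorem succHead_blocks (c : Composition (n + 1)) :
    c.succHead.blocks = c.blocks.modifyHead (· + 1) := rfl

@[simp] theorem consOne_length (c : Composition n) : c.consOne.length = c.length + 1 := rfl

@[simp] theorem succHead_length (c : Composition (n + 1)) : c.succHead.length = c.length := by
  obtain ⟨_ | ⟨b, bs⟩, -, hsum⟩ := c
  · simp at hsum
  · simp [Composition.length]

theorem bijective_sumElim_consOne_succHead :
    Function.Bijective (Sum.elim consOne succHead :
      Composition (n + 1) ⊕ Composition (n + 1) → Composition (n + 2)) := by
  refine ⟨Function.Injective.sumElim ?_ ?_ ?_, ?_⟩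
  · intro c d h
    ext1
    simpa using congrArg blocks h
  · intro c d h
    ext1
    have hid : (· - 1) ∘ (· + 1) = @id ℕ := funext fun m => Nat.add_sub_cancel m 1
    have := congrArg (fun c => c.blocks.modifyHead (· - 1)) h
    simpa only [succHead_blocks, modifyHead_modifyHead, hid, modifyHead_id, id_eq] using this
  · rintro c ⟨_ | ⟨b, bs⟩, hpos, hsum⟩ h
    · simp at hsum
    · have hb : 1 = b + 1 := (cons_eq_cons.1 (congrArg blocks h)).1
      exact (hpos mem_cons_self).ne' (by omega)
  · rintro ⟨_ | ⟨_ | _ | b, bs⟩, hpos, hsum⟩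
    · simp at hsum
    · simp at hpos
    · refine ⟨.inl ⟨bs, fun hi => hpos (mem_cons_of_mem _ hi), ?_⟩, rfl⟩
      simp only [sum_cons] at hsum
      omega
    · refine ⟨.inr ⟨(b + 1) :: bs, ?_, ?_⟩, rfl⟩
      · simpa using fun _ hi => hpos (mem_cons_of_mem _ hi)
      · simp only [sum_cons] at hsum ⊢
        omega

end Composition

namespace List

variable {α M : Type*} {n : ℕ}

theorem splitWrtComposition_consOne (x : α) (l : List α) (c : Composition n) :
    (x :: l).splitWrtComposition c.consOne = [x] :: l.splitWrtComposition c := by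
  simp [splitWrtComposition, splitWrtCompositionAux_cons]

theorem map_prod_splitWrtComposition_succHead [Monoid M] (x y : M) (t : List M)
    (c : Composition (n + 1)) :
    ((x :: y :: t).splitWrtComposition c.succHead).map prod
      = (((x * y) :: t).splitWrtComposition c).map prod := by
  obtain ⟨_ | ⟨_ | b, bs⟩, hpos, hsum⟩ := c
  · simp at hsum
  · simp at hpos
  · simp [splitWrtComposition, splitWrtCompositionAux_cons, mul_assoc]

theorem splitWrtComposition_map_finRange (a : Fin n → α) (c : Composition n) :
    ((finRange n).map a).splitWrtComposition c
      = ofFn fun i => (finRange (c.blocksFun i)).map fun j => a (c.embedding i j) := by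
  apply ext_getElem
  · simp [length_splitWrtComposition]
  · intro i h₁ h₂
    have hi : i < c.length := by simpa using h₂
    have hsucc : c.sizeUpTo (i + 1) = c.sizeUpTo i + c.blocksFun ⟨i, hi⟩ := c.sizeUpTo_succ hi
    have hle : c.sizeUpTo (i + 1) ≤ n := c.sizeUpTo_le _
    rw [List.getElem_ofFn, getElem_splitWrtComposition]
    apply ext_getElem
    · simp only [length_drop, length_take, length_map, length_finRange]
      omega
    · intro j _ _
      simp only [getElem_drop, getElem_take, getElem_map, getElem_finRange]
      exact congrArg a (Fin.ext (by simp))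

end List

section BooleanCumulant

variable {M R : Type*} [Monoid M] [CommRing R] (φ : M → R)

/-- The list `l` is meant to have length `n`; keeping `n` separate lets the recursion
`booleanCumulant_add_two_cons_cons` hold for every list. -/
def booleanCumulant (n : ℕ) (l : List M) : R :=
  ∑ c : Composition n, (-1) ^ (c.length - 1) * (((l.splitWrtComposition c).map prod).map φ).prod

theorem booleanCumulant_one_singleton (x : M) : booleanCumulant φ 1 [x] = φ x := by
  have hsingle (c : Composition 1) : c = Composition.single 1 one_pos :=
    Fintype.card_le_one_iff.1 (by simp [composition_card]) _ _
  rw [booleanCumulant, Fintype.sum_eq_single _ fun c hc => (hc (hsingle c)).elim]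
  simp [splitWrtComposition, Composition.single_blocks, splitWrtCompositionAux]

theorem booleanCumulant_add_two_cons_cons (n : ℕ) (x y : M) (t : List M) :
    booleanCumulant φ (n + 2) (x :: y :: t)
      = booleanCumulant φ (n + 1) ((x * y) :: t) - φ x * booleanCumulant φ (n + 1) (y :: t) := by
  rw [booleanCumulant, ← Fintype.sum_bijective _ Composition.bijective_sumElim_consOne_succHead
    _ _ fun _ => rfl, Fintype.sum_sum_type]
  simp only [Sum.elim_inl, Sum.elim_inr, Composition.consOne_length,
    Composition.succHead_length, splitWrtComposition_consOne,
    map_prod_splitWrtComposition_succHead, booleanCumulant]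
  rw [sub_eq_neg_add, Finset.mul_sum, ← Finset.sum_neg_distrib]
  congr 1
  refine Finset.sum_congr rfl fun c _ => ?_
  obtain ⟨m, hm⟩ := Nat.exists_eq_add_of_lt (c.length_pos_of_pos n.succ_pos)
  simp only [hm, add_tsub_cancel_right, pow_succ, mul_neg, mul_one, map_cons, prod_cons,
    prod_nil, map_map, neg_mul, neg_inj]
  ring

theorem booleanCumulant_map_finRange (n : ℕ) (a : Fin n → M) :
    booleanCumulant φ n ((finRange n).map a) = ∑ c : Composition n, (-1) ^ (c.length - 1) *
      ∏ i : Fin c.length, φ ((finRange (c.blocksFun i)).map fun j => a (c.embedding i j)).prod := by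
  simp only [booleanCumulant, splitWrtComposition_map_finRange, map_ofFn, prod_ofFn,
    Function.comp_def]

end BooleanCumulant

section InnerProductSpace

variable {𝕜 E : Type*} [RCLike 𝕜] [NormedAddCommGroup E] [InnerProductSpace 𝕜 E]

open scoped InnerProductSpace

theorem inner_intersperse_prod_eq_booleanCumulant {ξ : E} {Q : E →L[𝕜] E}
    (hQ : ∀ v, Q v = v - ⟪ξ, v⟫_𝕜 • ξ) (x : E →L[𝕜] E) (l : List (E →L[𝕜] E)) :
    ⟪ξ, (intersperse Q (x :: l)).prod ξ⟫_𝕜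
      = booleanCumulant (fun T : E →L[𝕜] E => ⟪ξ, T ξ⟫_𝕜) (l.length + 1) (x :: l) := by
  induction l generalizing x with
  | nil => simp [booleanCumulant_one_singleton]
  | cons y t ih =>
    set S := (intersperse Q (y :: t)).prod
    have hfactor : ⟪ξ, (x * Q * S) ξ⟫_𝕜 = ⟪ξ, (x * S) ξ⟫_𝕜 - ⟪ξ, x ξ⟫_𝕜 * ⟪ξ, S ξ⟫_𝕜 := by
      simp [hQ, inner_sub_right, inner_smul_right, mul_comm]
    have hmul : x * S = (intersperse Q ((x * y) :: t)).prod := by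
      cases t <;> simp [S, mul_assoc]
    rw [intersperse_cons_cons, prod_cons, prod_cons, ← mul_assoc, hfactor, hmul, ih, ih,
      length_cons, booleanCumulant_add_two_cons_cons]

end InnerProductSpace

theorem stmt3_general {H : Type*} [NormedAddCommGroup H] [InnerProductSpace ℂ H]
    (ξ : H) (P Q : H →L[ℂ] H)
    (hP : ∀ x : H, P x = (inner ℂ ξ x : ℂ) • ξ) (hQ : Q = 1 - P)
    (k : ℕ) (hk : 1 ≤ k) (a : Fin k → (H →L[ℂ] H)) :
    (∑ c : Composition k, (-1 : ℂ) ^ (c.length - 1) *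
        ∏ i : Fin c.length,
          (inner ℂ ξ ((((List.finRange (c.blocksFun i)).map
            (fun j => a (c.embedding i j))).prod) ξ) : ℂ))
      = (inner ℂ ξ (((List.intersperse Q ((List.finRange k).map a)).prod) ξ) : ℂ) := by
  obtain ⟨m, rfl⟩ := Nat.exists_eq_add_of_le' hk
  have hQv (v : H) : Q v = v - inner ℂ ξ v • ξ := by simp [hQ, hP]
  rw [← booleanCumulant_map_finRange (fun T : H →L[ℂ] H => inner ℂ ξ (T ξ)), finRange_succ,
    map_cons, map_map, inner_intersperse_prod_eq_booleanCumulant hQv, length_map,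
    length_finRange]

/-- Boolean cumulants via the projection `Q` onto the orthogonal complement of the
state vector: let `(A,φ)` be realized on a Hilbert space `H` with unit vector `ξ`,
`φ(a) = ⟨ξ, a ξ⟩`, `P` the rank-one projection onto `ℂξ` and `Q = 1 - P`.  Then
`K_bool,k[a₁,...,a_k] = ⟨ξ, a₁ Q a₂ Q ⋯ Q a_k ξ⟩`, where the boolean cumulant is
`∑_{π ∈ I_k} (-1)^{|π|-1} ∏_{B ∈ π} φ(∏_{j ∈ B} a_j)` over interval partitions of
`[k]` (encoded as compositions of `k`, with `c.embedding i` enumerating the `i`-th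
block in increasing order). -/
theorem stmt3 {H : Type*} [NormedAddCommGroup H] [InnerProductSpace ℂ H]
    (ξ : H) (hξ : ‖ξ‖ = 1) (P Q : H →L[ℂ] H)
    (hP : ∀ x : H, P x = (inner ℂ ξ x : ℂ) • ξ) (hQ : Q = 1 - P)
    (k : ℕ) (hk : 1 ≤ k) (a : Fin k → (H →L[ℂ] H)) :
    (∑ c : Composition k, (-1 : ℂ) ^ (c.length - 1) *
        ∏ i : Fin c.length,
          (inner ℂ ξ ((((List.finRange (c.blocksFun i)).map
            (fun j => a (c.embedding i j))).prod) ξ) : ℂ))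
      = (inner ℂ ξ (((List.intersperse Q ((List.finRange k).map a)).prod) ξ) : ℂ) :=
  stmt3_general ξ P Q hP hQ k hk a
end

section
/- Let G_n = (V_n, E_n) be finite digraphs, let (Ω,ρ) be a complete probability space, E ⊆ Ω×Ω measurable, (A_{n,v})_{v∈V_n} a measurable partition of Ω into sets of measure 1/|V_n|, and Ẽ_n = ⋃_{(v,w)∈E_n} A_{n,v} × A_{n,w}. If ρ^{×2}(Ẽ_n Δ E) → 0 as n → ∞, then for every finite digraph G' = (V',E'), lim_{n→∞} |Hom(G',G_n)| / |V_n|^{|V'|} = ρ^{×V'}(Hom(G',(Ω,E))). -/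
open MeasureTheory Filter
open scoped ENNReal symmDiff

/-!
A point `ω ∈ Ω^{V'}` lies in `Hom(G', Ẽ_n)` exactly when the map sending each `a ∈ V'` to the
block of the partition containing `ω a` is a homomorphism `G' → G_n`; as the blocks have measure
`1/|V_n|`, the normalized count equals `ρ^{×V'}(Hom(G', Ẽ_n))`. On the other hand `S ↦ Hom(G', S)`
is Lipschitz for the symmetric difference: `Hom(G', S) Δ Hom(G', T)` is covered by the preimages
of `S Δ T` under `ω ↦ (ω a, ω b)` for the edges `(a, b)` of `G'`, and since `a ≠ b` this map
pushes `ρ^{×V'}` forward to `ρ × ρ`.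
-/

theorem MeasureTheory.Measure.map_pi_eval_prodMk {ι α : Type*} [Fintype ι] [MeasurableSpace α]
    (μ : ι → Measure α) [∀ i, IsProbabilityMeasure (μ i)] {a b : ι} (hab : a ≠ b) :
    (Measure.pi μ).map (fun ω => (ω a, ω b)) = (μ a).prod (μ b) := by
  classical
  refine (Measure.prod_eq fun s t hs ht => ?_).symm
  let box : ι → Set α := fun i => if i = a then s else if i = b then t else Set.univ
  have hpre : (fun ω : ι → α => (ω a, ω b)) ⁻¹' s ×ˢ t = Set.univ.pi box := by
    ext ω
    simp only [Set.mem_preimage, Set.mem_prod, Set.mem_univ_pi, box]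
    refine ⟨fun h i => ?_, fun h => ⟨by simpa using h a, by simpa [hab.symm] using h b⟩⟩
    split_ifs with ha hb <;> simp_all
  have hbox : ∀ i, μ i (box i) = (if i = a then μ i s else 1) * (if i = b then μ i t else 1) := by
    intro i
    by_cases ha : i = a
    · simp [box, ha, hab]
    · by_cases hb : i = b <;> simp [box, ha, hb, hab.symm]
  rw [Measure.map_apply ((measurable_pi_apply a).prodMk (measurable_pi_apply b)) (hs.prod ht),
    hpre, Measure.pi_pi, Finset.prod_congr rfl fun i _ => hbox i, Finset.prod_mul_distrib,
    Fintype.prod_ite_eq', Fintype.prod_ite_eq']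

theorem abs_measureReal_sub_le_symmDiff {α : Type*} [MeasurableSpace α]
    {μ : Measure α} [IsFiniteMeasure μ] (s t : Set α) :
    |μ.real s - μ.real t| ≤ μ.real (s ∆ t) := by
  have key : ∀ s t : Set α, μ.real s ≤ μ.real t + μ.real (s ∆ t) := fun s t =>
    (measureReal_mono fun x hx => by by_cases h : x ∈ t <;> simp_all [Set.mem_symmDiff]).trans
      (measureReal_union_le _ _)
  have hts := key t s
  rw [symmDiff_comm] at hts
  rw [abs_sub_le_iff]
  constructor <;> linarith [key s t]

section HomSet

variable {ι α κ : Type*}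

def homSet (E' : ι → ι → Prop) (S : Set (α × α)) : Set (ι → α) :=
  {ω | ∀ a b, E' a b → (ω a, ω b) ∈ S}

def stepSet (A : κ → Set α) (R : κ → κ → Prop) : Set (α × α) :=
  {p | ∃ v w, R v w ∧ p.1 ∈ A v ∧ p.2 ∈ A w}

theorem homSet_symmDiff_subset (E' : ι → ι → Prop) (S T : Set (α × α)) :
    homSet E' S ∆ homSet E' T ⊆
      ⋃ p : {p : ι × ι // E' p.1 p.2}, (fun ω : ι → α => (ω p.1.1, ω p.1.2)) ⁻¹' (S ∆ T) := by
  intro ω hω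
  simp only [Set.mem_iUnion, Set.mem_preimage, Subtype.exists, Prod.exists]
  rcases Set.mem_symmDiff.mp hω with ⟨hS, hT⟩ | ⟨hT, hS⟩
  · simp only [homSet, Set.mem_ofPred_eq, not_forall] at hT
    obtain ⟨a, b, hab, hnot⟩ := hT
    exact ⟨a, b, hab, Or.inl ⟨hS a b hab, hnot⟩⟩
  · simp only [homSet, Set.mem_ofPred_eq, not_forall] at hS
    obtain ⟨a, b, hab, hnot⟩ := hS
    exact ⟨a, b, hab, Or.inr ⟨hT a b hab, hnot⟩⟩

theorem homSet_stepSet_eq_iUnion {A : κ → Set α} (hdisj : Pairwise (Function.onFun Disjoint A))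
    (hcover : ⋃ v, A v = Set.univ) (E' : ι → ι → Prop) (R : κ → κ → Prop) :
    homSet E' (stepSet A R) =
      ⋃ f : {f : ι → κ // ∀ a b, E' a b → R (f a) (f b)}, Set.univ.pi fun a => A (f.1 a) := by
  have hblock : ∀ x, ∃ v, x ∈ A v := fun x => Set.mem_iUnion.mp (hcover ▸ Set.mem_univ x)
  have huniq : ∀ {x v w}, x ∈ A v → x ∈ A w → v = w := fun hv hw =>
    by_contra fun h => Set.disjoint_left.mp (hdisj h) hv hw
  ext ω
  simp only [homSet, stepSet, Set.mem_ofPred_eq, Set.mem_iUnion, Set.mem_univ_pi, Subtype.exists,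
    exists_prop]
  constructor
  · intro hω
    choose f hf using fun a => hblock (ω a)
    refine ⟨f, fun a b hab => ?_, hf⟩
    obtain ⟨v, w, hvw, hv, hw⟩ := hω a b hab
    rwa [huniq hv (hf a), huniq hw (hf b)] at hvw
  · rintro ⟨f, hf, hω⟩ a b hab
    exact ⟨f a, f b, hf a b hab, hω a, hω b⟩

variable [MeasurableSpace α] [Fintype ι]

theorem measure_homSet_stepSet {ρ : Measure α} [SigmaFinite ρ] [Finite κ] {A : κ → Set α}
    (hmeas : ∀ v, MeasurableSet (A v)) (hdisj : Pairwise (Function.onFun Disjoint A))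
    (hcover : ⋃ v, A v = Set.univ) {c : ℝ≥0∞} (hsize : ∀ v, ρ (A v) = c)
    (E' : ι → ι → Prop) (R : κ → κ → Prop) :
    Measure.pi (fun _ : ι => ρ) (homSet E' (stepSet A R)) =
      Nat.card {f : ι → κ // ∀ a b, E' a b → R (f a) (f b)} * c ^ Fintype.card ι := by
  rw [homSet_stepSet_eq_iUnion hdisj hcover, measure_iUnion]
  · simp only [Measure.pi_pi, hsize, Finset.prod_const, Finset.card_univ, ENNReal.tsum_const,
      ENat.card_eq_coe_natCard, ENat.toENNReal_coe]
  · intro f g hfg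
    obtain ⟨a, ha⟩ := Function.ne_iff.mp (Subtype.coe_ne_coe.mpr hfg)
    exact Set.disjoint_univ_pi.mpr ⟨a, hdisj ha⟩
  · exact fun f => MeasurableSet.univ_pi fun a => hmeas (f.1 a)

theorem measure_homSet_symmDiff_le (ρ : Measure α) [IsProbabilityMeasure ρ]
    {E' : ι → ι → Prop} (hirr : ∀ a, ¬E' a a) (S T : Set (α × α)) :
    Measure.pi (fun _ : ι => ρ) (homSet E' S ∆ homSet E' T) ≤
      Nat.card {p : ι × ι // E' p.1 p.2} * ρ.prod ρ (S ∆ T) := by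
  calc _ ≤ ∑' p : {p : ι × ι // E' p.1 p.2},
          Measure.pi (fun _ : ι => ρ) ((fun ω : ι → α => (ω p.1.1, ω p.1.2)) ⁻¹' (S ∆ T)) :=
        (measure_mono (homSet_symmDiff_subset E' S T)).trans (measure_iUnion_le _)
    _ ≤ ∑' _ : {p : ι × ι // E' p.1 p.2}, ρ.prod ρ (S ∆ T) := by
        refine ENNReal.tsum_le_tsum fun p => ?_
        obtain ⟨⟨a, b⟩, hab⟩ := p
        have hne : a ≠ b := by rintro rfl; exact hirr a hab
        rw [← Measure.map_pi_eval_prodMk (fun _ => ρ) hne]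
        exact Measure.le_map_apply (by fun_prop) _
    _ = _ := by rw [ENNReal.tsum_const, ENat.card_eq_coe_natCard, ENat.toENNReal_coe]

theorem abs_measureReal_homSet_sub_le (ρ : Measure α) [IsProbabilityMeasure ρ]
    {E' : ι → ι → Prop} (hirr : ∀ a, ¬E' a a) (S T : Set (α × α)) :
    |(Measure.pi fun _ : ι => ρ).real (homSet E' S) -
        (Measure.pi fun _ : ι => ρ).real (homSet E' T)| ≤
      Nat.card {p : ι × ι // E' p.1 p.2} * (ρ.prod ρ).real (S ∆ T) := by
  refine (abs_measureReal_sub_le_symmDiff _ _).trans ?_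
  simpa [measureReal_def] using
    ENNReal.toReal_mono (by finiteness) (measure_homSet_symmDiff_le ρ hirr S T)

end HomSet

theorem stmt9_general {Ω : Type*} [MeasurableSpace Ω] (ρ : Measure Ω) [IsProbabilityMeasure ρ]
    (E : Set (Ω × Ω))
    (V : ℕ → Type*) [∀ n, Fintype (V n)] (En : ∀ n, V n → V n → Prop)
    (A : ∀ n, V n → Set Ω) (hmeas : ∀ n v, MeasurableSet (A n v))
    (hdisj : ∀ n, Pairwise (Function.onFun Disjoint (A n)))
    (hcover : ∀ n, ⋃ v, A n v = Set.univ)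
    (hsize : ∀ n v, ρ (A n v) = 1 / (Fintype.card (V n) : ℝ≥0∞))
    (hconv : Tendsto (fun n =>
        ((ρ.prod ρ) (symmDiff
          {p : Ω × Ω | ∃ v w, En n v w ∧ p.1 ∈ A n v ∧ p.2 ∈ A n w} E)).toReal)
      atTop (nhds 0))
    {V' : Type*} [Fintype V'] (E' : V' → V' → Prop) (hirr' : ∀ v, ¬E' v v) :
    Tendsto (fun n =>
        (Nat.card {f : V' → V n // ∀ a b, E' a b → En n (f a) (f b)} : ℝ) /
          (Fintype.card (V n) : ℝ) ^ (Fintype.card V'))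
      atTop
      (nhds (((Measure.pi fun _ : V' => ρ)
        {ω : V' → Ω | ∀ v w, E' v w → (ω v, ω w) ∈ E}).toReal)) := by
  have hcount : ∀ n, (Nat.card {f : V' → V n // ∀ a b, E' a b → En n (f a) (f b)} : ℝ) /
      (Fintype.card (V n) : ℝ) ^ (Fintype.card V') =
        (Measure.pi fun _ : V' => ρ).real (homSet E' (stepSet (A n) (En n))) := fun n => by
    rw [measureReal_def, measure_homSet_stepSet (hmeas n) (hdisj n) (hcover n) (hsize n)]
    simp [div_eq_mul_inv]
  simp_rw [hcount]
  refine tendsto_iff_dist_tendsto_zero.2 (squeeze_zero (fun _ => dist_nonneg) (fun n => ?_)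
    (by simpa using hconv.const_mul (Nat.card {p : V' × V' // E' p.1 p.2} : ℝ)))
  exact abs_measureReal_homSet_sub_le ρ hirr' _ E

/-- Continuum limit of digraph homomorphism counts: if finite digraphs
`G_n = (V_n, E_n)` discretize a measurable digraph `(Ω, E)` on a complete probability
space — i.e. `Ẽ_n = ⋃_{(v,w) ∈ E_n} A_{n,v} × A_{n,w}` for measurable partitions
`(A_{n,v})` of `Ω` into sets of measure `1/|V_n|`, with `(ρ×ρ)(Ẽ_n Δ E) → 0` — then
for every finite digraph `G' = (V', E')`,
`|Hom(G',G_n)|/|V_n|^{|V'|} → ρ^{×V'}(Hom(G',(Ω,E)))`. -/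
theorem stmt9 {Ω : Type*} [MeasurableSpace Ω] (ρ : Measure Ω) [IsProbabilityMeasure ρ]
    (hcomplete : ρ.IsComplete)
    (E : Set (Ω × Ω)) (hE : MeasurableSet E)
    (V : ℕ → Type*) [∀ n, Fintype (V n)] (En : ∀ n, V n → V n → Prop)
    (hirr : ∀ n v, ¬En n v v)
    (A : ∀ n, V n → Set Ω) (hmeas : ∀ n v, MeasurableSet (A n v))
    (hdisj : ∀ n, Pairwise (Function.onFun Disjoint (A n)))
    (hcover : ∀ n, ⋃ v, A n v = Set.univ)
    (hsize : ∀ n v, ρ (A n v) = 1 / (Fintype.card (V n) : ℝ≥0∞))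
    (hconv : Tendsto (fun n =>
        ((ρ.prod ρ) (symmDiff
          {p : Ω × Ω | ∃ v w, En n v w ∧ p.1 ∈ A n v ∧ p.2 ∈ A n w} E)).toReal)
      atTop (nhds 0))
    {V' : Type*} [Fintype V'] (E' : V' → V' → Prop) (hirr' : ∀ v, ¬E' v v) :
    Tendsto (fun n =>
        (Nat.card {f : V' → V n // ∀ a b, E' a b → En n (f a) (f b)} : ℝ) /
          (Fintype.card (V n) : ℝ) ^ (Fintype.card V'))
      atTop
      (nhds (((Measure.pi fun _ : V' => ρ)
        {ω : V' → Ω | ∀ v w, E' v w → (ω v, ω w) ∈ E}).toReal)) :=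
  stmt9_general ρ E V En A hmeas hdisj hcover hsize hconv E' hirr'
end

section
/- Let μ be a compactly supported probability measure on ℝ with support radius rad(μ), and let κ_bool,k(μ) denote its k-th boolean cumulant. Then |κ_bool,k(μ)| ≤ rad(μ)^k for all k ≥ 1. -/
/-!
With `Q f = f - ∫ f ∂μ` and `gₙ = (Q x)ⁿ 1` in `L²(μ)`, the boolean cumulant is
`κₙ₊₁ = ⟨1, x gₙ⟩`: both sides satisfy the moment–cumulant recursion obtained by splitting off
the first block of an interval partition. As `gₙ₊₁ = Q (x gₙ)` and `⟨1, x gₙ⟩` is the component of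
`x gₙ` along `1`, Pythagoras gives `‖gₙ₊₁‖² + κₙ₊₁² = ‖x gₙ‖² ≤ M² ‖gₙ‖²` whenever `|x| ≤ M`
`μ`-almost everywhere. Hence `‖gₙ‖ ≤ Mⁿ` and `|κₙ₊₁| ≤ Mⁿ⁺¹`; take `M = rad(μ)`.
-/

open MeasureTheory

/-- The `k`-th boolean cumulant of a measure `μ` on `ℝ`:
`κ_bool,k(μ) = ∑_{π ∈ I_k} (-1)^{|π|-1} ∏_{B ∈ π} m_{|B|}(μ)`, the sum over interval
partitions of `[k]` (encoded as compositions of `k`) with `m_j(μ)` the `j`-th moment. -/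
noncomputable def boolCumulant (μ : Measure ℝ) (k : ℕ) : ℝ :=
  ∑ c : Composition k, (-1 : ℝ) ^ (c.length - 1) *
    ∏ i : Fin c.length, ∫ x, x ^ (c.blocksFun i) ∂μ

/-- The support radius of a measure on `ℝ`:
`rad(μ) = inf {R > 0 : supp(μ) ⊆ [-R,R]}`. -/
noncomputable def suppRadius (μ : Measure ℝ) : ℝ :=
  sInf {R : ℝ | 0 < R ∧ μ (Set.Icc (-R) R)ᶜ = 0}

open Set ProbabilityTheory

namespace Composition

def consBlock {n : ℕ} (p : Σ j : Fin n, Composition j) : Composition n where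
  blocks := (n - p.1) :: p.2.blocks
  blocks_pos {i} hi := by
    rcases List.mem_cons.mp hi with rfl | h
    · exact Nat.sub_pos_of_lt p.1.isLt
    · exact p.2.blocks_pos h
  blocks_sum := by
    rw [List.sum_cons, p.2.blocks_sum]
    exact Nat.sub_add_cancel p.1.isLt.le

theorem consBlock_bijective (n : ℕ) : Function.Bijective (consBlock (n := n + 1)) := by
  refine ⟨?_, fun c => ?_⟩
  · rintro ⟨⟨j₁, h₁⟩, c₁⟩ ⟨⟨j₂, h₂⟩, c₂⟩ h
    obtain ⟨hj, hc⟩ := List.cons_eq_cons.mp (congrArg blocks h)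
    obtain rfl : j₁ = j₂ := by simp only at hj; omega
    exact Sigma.ext rfl (heq_of_eq (Composition.ext hc))
  · obtain ⟨b, t, hbt⟩ := List.exists_cons_of_ne_nil (c.blocks_eq_nil.not.mpr n.succ_ne_zero)
    have hb : 0 < b := c.blocks_pos (hbt ▸ List.mem_cons_self)
    have hsum : b + t.sum = n + 1 := by rw [← List.sum_cons, ← hbt, c.blocks_sum]
    refine ⟨⟨⟨t.sum, by omega⟩,
      ⟨t, fun hi => c.blocks_pos (hbt ▸ List.mem_cons_of_mem _ hi), rfl⟩⟩, Composition.ext ?_⟩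
    change (n + 1 - t.sum) :: t = c.blocks
    rw [hbt, show n + 1 - t.sum = b by omega]

theorem prod_blocksFun {M : Type*} [CommMonoid M] {n : ℕ} (c : Composition n) (f : ℕ → M) :
    ∏ i, f (c.blocksFun i) = (c.blocks.map f).prod := by
  rw [← c.ofFn_blocksFun, List.map_ofFn, List.prod_ofFn]
  rfl

end Composition

section MomentSequence

variable {R : Type*} [CommRing R] (m : ℕ → R)

def seqBoolCumulant (k : ℕ) : R :=
  ∑ c : Composition k, (-1) ^ (c.length - 1) * ∏ i, m (c.blocksFun i)

/-- The coefficients of the power series `(1 + ∑_{j ≥ 1} m j zʲ)⁻¹`. -/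
def signedCompositionSum (n : ℕ) : R :=
  ∑ c : Composition n, (-1) ^ c.length * (c.blocks.map m).prod

theorem signedCompositionSum_zero : signedCompositionSum m 0 = 1 := by
  have hc (c : Composition 0) : c = Composition.ones 0 :=
    Composition.ext ((c.blocks_eq_nil.mpr rfl).trans rfl)
  rw [signedCompositionSum, Fintype.sum_eq_single (Composition.ones 0) fun c h => (h (hc c)).elim]
  simp [Composition.ones, Composition.length]

theorem signedCompositionSum_succ (n : ℕ) :
    signedCompositionSum m (n + 1) =
      -∑ j : Fin (n + 1), m (n + 1 - j) * signedCompositionSum m j := by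
  rw [signedCompositionSum, ← Fintype.sum_bijective _ (Composition.consBlock_bijective n) _ _
    fun _ => rfl, ← Finset.univ_sigma_univ, Finset.sum_sigma, ← Finset.sum_neg_distrib]
  refine Finset.sum_congr rfl fun j _ => ?_
  rw [signedCompositionSum, Finset.mul_sum, ← Finset.sum_neg_distrib]
  refine Finset.sum_congr rfl fun c _ => ?_
  simp only [Composition.consBlock, Composition.length, List.length_cons, List.map_cons,
    List.prod_cons, pow_succ]
  ring

theorem seqBoolCumulant_eq_neg_signedCompositionSum {k : ℕ} (hk : k ≠ 0) :
    seqBoolCumulant m k = -signedCompositionSum m k := by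
  rw [seqBoolCumulant, signedCompositionSum, ← Finset.sum_neg_distrib]
  refine Finset.sum_congr rfl fun c _ => ?_
  obtain ⟨l, hl⟩ := Nat.exists_eq_add_one_of_ne_zero (c.length_eq_zero.not.mpr hk)
  rw [c.prod_blocksFun, hl, Nat.add_sub_cancel, pow_succ]
  ring

theorem seqBoolCumulant_succ (n : ℕ) :
    seqBoolCumulant m (n + 1) =
      m (n + 1) - ∑ j ∈ Finset.range n, m (n - j) * seqBoolCumulant m (j + 1) := by
  rw [seqBoolCumulant_eq_neg_signedCompositionSum m n.succ_ne_zero, signedCompositionSum_succ,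
    neg_neg, Fin.sum_univ_succ]
  simp only [Fin.val_zero, Fin.val_succ, Nat.sub_zero, signedCompositionSum_zero, mul_one,
    Nat.add_sub_add_right]
  rw [Fin.sum_univ_eq_sum_range (fun j => m (n - j) * signedCompositionSum m (j + 1)),
    sub_eq_add_neg, ← Finset.sum_neg_distrib]
  simp only [seqBoolCumulant_eq_neg_signedCompositionSum m (Nat.succ_ne_zero _), mul_neg, neg_neg]

end MomentSequence

theorem boolCumulant_eq_seqBoolCumulant (μ : Measure ℝ) :
    boolCumulant μ = seqBoolCumulant fun j => ∫ x, x ^ j ∂μ :=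
  rfl

theorem Continuous.integrable_of_ae_mem {X E : Type*} [TopologicalSpace X] [T2Space X]
    [MeasurableSpace X] [OpensMeasurableSpace X] [NormedAddCommGroup E] {μ : Measure X}
    [IsFiniteMeasureOnCompacts μ] {K : Set X} {f : X → E} (hf : Continuous f) (hK : IsCompact K)
    (hμ : ∀ᵐ x ∂μ, x ∈ K) : Integrable f μ := by
  rw [← Measure.restrict_eq_self_of_ae_mem hμ]
  exact hf.continuousOn.integrableOn_compact hK

theorem ae_mem_Icc_suppRadius {μ : Measure ℝ} (h : ∃ R : ℝ, 0 < R ∧ μ (Icc (-R) R)ᶜ = 0) :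
    ∀ᵐ x ∂μ, x ∈ Icc (-suppRadius μ) (suppRadius μ) := by
  obtain ⟨u, -, hu, huS⟩ := exists_seq_tendsto_sInf h ⟨0, fun _ hR => hR.1.le⟩
  filter_upwards [ae_all_iff.mpr fun n => mem_ae_iff.mpr (huS n).2] with x hx
  exact ⟨neg_le.mp (ge_of_tendsto' hu fun n => neg_le.mp (hx n).1),
    ge_of_tendsto' hu fun n => (hx n).2⟩

section BoundedSupport

variable (μ : Measure ℝ)

/-- The vector `(Q x)ⁿ 1` of `L²(μ)`, where `Q f = f - ∫ f ∂μ` is the projection onto the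
orthogonal complement of the constants when `μ` is a probability measure. -/
noncomputable def qxPow : ℕ → ℝ → ℝ
  | 0 => fun _ => 1
  | n + 1 => fun x => x * qxPow n x - ∫ y, y * qxPow n y ∂μ

theorem qxPow_succ (n : ℕ) (x : ℝ) :
    qxPow μ (n + 1) x = x * qxPow μ n x - ∫ y, y * qxPow μ n y ∂μ :=
  rfl

theorem continuous_qxPow (n : ℕ) : Continuous (qxPow μ n) := by
  induction n with
  | zero => exact continuous_const
  | succ n ih => exact (continuous_id.mul ih).sub continuous_const

theorem mul_qxPow_eq (n : ℕ) (x : ℝ) :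
    x * qxPow μ n x =
      x ^ (n + 1) - ∑ i ∈ Finset.range n, (∫ y, y * qxPow μ i y ∂μ) * x ^ (n - i) := by
  induction n with
  | zero => simp [qxPow]
  | succ n ih =>
    have hsum : ∀ i ∈ Finset.range n, x * ((∫ y, y * qxPow μ i y ∂μ) * x ^ (n - i)) =
        (∫ y, y * qxPow μ i y ∂μ) * x ^ (n + 1 - i) := fun i hi => by
      rw [Nat.sub_add_comm (Finset.mem_range.mp hi).le, pow_succ]
      ring
    rw [qxPow_succ, mul_sub, ih, mul_sub, Finset.mul_sum, Finset.sum_congr rfl hsum,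
      Finset.sum_range_succ, Nat.add_sub_cancel_left]
    ring

variable {μ} {M : ℝ}

theorem integral_mul_qxPow_eq [IsFiniteMeasure μ]
    (hμ : ∀ᵐ x ∂μ, x ∈ Icc (-M) M) (n : ℕ) :
    ∫ x, x * qxPow μ n x ∂μ = ∫ x, x ^ (n + 1) ∂μ -
      ∑ i ∈ Finset.range n, (∫ x, x ^ (n - i) ∂μ) * ∫ x, x * qxPow μ i x ∂μ := by
  have hpow (j : ℕ) : Integrable (fun x : ℝ => x ^ j) μ :=
    (continuous_pow j).integrable_of_ae_mem isCompact_Icc hμ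
  simp only [mul_qxPow_eq μ n]
  rw [integral_sub (hpow _) (integrable_finsetSum _ fun i _ => (hpow _).const_mul _),
    integral_finsetSum _ fun i _ => (hpow _).const_mul _]
  exact congrArg _ (Finset.sum_congr rfl fun i _ => by rw [integral_const_mul, mul_comm])

theorem boolCumulant_succ_eq_integral [IsFiniteMeasure μ]
    (hμ : ∀ᵐ x ∂μ, x ∈ Icc (-M) M) (n : ℕ) :
    boolCumulant μ (n + 1) = ∫ x, x * qxPow μ n x ∂μ := by
  induction n using Nat.strong_induction_on with
  | _ n ih =>
    rw [boolCumulant_eq_seqBoolCumulant, seqBoolCumulant_succ, integral_mul_qxPow_eq hμ,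
      ← boolCumulant_eq_seqBoolCumulant]
    refine congrArg _ (Finset.sum_congr rfl fun i hi => ?_)
    rw [ih i (Finset.mem_range.mp hi)]

theorem integral_id_mul_sq_le [IsFiniteMeasure μ]
    (hμ : ∀ᵐ x ∂μ, x ∈ Icc (-M) M) {f : ℝ → ℝ} (hf : Continuous f) :
    ∫ x, (x * f x) ^ 2 ∂μ ≤ M ^ 2 * ∫ x, f x ^ 2 ∂μ := by
  rw [← integral_const_mul]
  refine integral_mono_ae
    (((continuous_id.mul hf).pow 2).integrable_of_ae_mem isCompact_Icc hμ)
    (((hf.pow 2).const_mul _).integrable_of_ae_mem isCompact_Icc hμ) ?_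
  filter_upwards [hμ] with x hx
  rw [mul_pow]
  exact mul_le_mul_of_nonneg_right (sq_le_sq' hx.1 hx.2) (sq_nonneg _)

theorem integral_qxPow_succ_sq [IsProbabilityMeasure μ]
    (hμ : ∀ᵐ x ∂μ, x ∈ Icc (-M) M) (n : ℕ) :
    ∫ x, qxPow μ (n + 1) x ^ 2 ∂μ =
      ∫ x, (x * qxPow μ n x) ^ 2 ∂μ - (∫ x, x * qxPow μ n x ∂μ) ^ 2 := by
  have hxq : Continuous fun x => x * qxPow μ n x := continuous_id.mul (continuous_qxPow μ n)
  have hL2 : MemLp (fun x => x * qxPow μ n x) 2 μ :=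
    (memLp_two_iff_integrable_sq hxq.aestronglyMeasurable).mpr
      ((hxq.pow 2).integrable_of_ae_mem isCompact_Icc hμ)
  calc ∫ x, qxPow μ (n + 1) x ^ 2 ∂μ = variance (fun x => x * qxPow μ n x) μ :=
        (variance_eq_integral hL2.aemeasurable).symm
    _ = _ := variance_eq_sub hL2

theorem integral_qxPow_sq_le [IsProbabilityMeasure μ]
    (hμ : ∀ᵐ x ∂μ, x ∈ Icc (-M) M) (n : ℕ) :
    ∫ x, qxPow μ n x ^ 2 ∂μ ≤ (M ^ n) ^ 2 := by
  induction n with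
  | zero => simp [qxPow]
  | succ n ih =>
    calc ∫ x, qxPow μ (n + 1) x ^ 2 ∂μ
        = ∫ x, (x * qxPow μ n x) ^ 2 ∂μ - (∫ x, x * qxPow μ n x ∂μ) ^ 2 :=
          integral_qxPow_succ_sq hμ n
      _ ≤ ∫ x, (x * qxPow μ n x) ^ 2 ∂μ := sub_le_self _ (sq_nonneg _)
      _ ≤ M ^ 2 * ∫ x, qxPow μ n x ^ 2 ∂μ := integral_id_mul_sq_le hμ (continuous_qxPow μ n)
      _ ≤ M ^ 2 * (M ^ n) ^ 2 := mul_le_mul_of_nonneg_left ih (sq_nonneg M)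
      _ = (M ^ (n + 1)) ^ 2 := by ring

theorem abs_integral_mul_qxPow_le [IsProbabilityMeasure μ]
    (hμ : ∀ᵐ x ∂μ, x ∈ Icc (-M) M) (n : ℕ) :
    |∫ x, x * qxPow μ n x ∂μ| ≤ M ^ (n + 1) := by
  have hM : 0 ≤ M := by
    obtain ⟨x, hx⟩ := hμ.exists
    linarith [hx.1, hx.2]
  refine abs_le_of_sq_le_sq ?_ (by positivity)
  calc (∫ x, x * qxPow μ n x ∂μ) ^ 2
      = ∫ x, (x * qxPow μ n x) ^ 2 ∂μ - ∫ x, qxPow μ (n + 1) x ^ 2 ∂μ := by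
        rw [integral_qxPow_succ_sq hμ]
        ring
    _ ≤ ∫ x, (x * qxPow μ n x) ^ 2 ∂μ := sub_le_self _ (integral_nonneg fun x => sq_nonneg _)
    _ ≤ M ^ 2 * ∫ x, qxPow μ n x ^ 2 ∂μ := integral_id_mul_sq_le hμ (continuous_qxPow μ n)
    _ ≤ M ^ 2 * (M ^ n) ^ 2 :=
      mul_le_mul_of_nonneg_left (integral_qxPow_sq_le hμ n) (sq_nonneg M)
    _ = (M ^ (n + 1)) ^ 2 := by ring

end BoundedSupport

/-- For a compactly supported probability measure `μ` on `ℝ`, the boolean cumulants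
satisfy `|κ_bool,k(μ)| ≤ rad(μ)^k` for all `k ≥ 1`. -/
theorem stmt16 (μ : Measure ℝ) [IsProbabilityMeasure μ]
    (hcpt : ∃ R : ℝ, 0 < R ∧ μ (Set.Icc (-R) R)ᶜ = 0) (k : ℕ) (hk : 1 ≤ k) :
    |boolCumulant μ k| ≤ suppRadius μ ^ k := by
  obtain ⟨n, rfl⟩ := Nat.exists_eq_add_of_le' hk
  have hμ := ae_mem_Icc_suppRadius hcpt
  rw [boolCumulant_succ_eq_integral hμ]
  exact abs_integral_mul_qxPow_le hμ n
end
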